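/- For all ξ, η, ζ ∈ g* and w ∈ g, the Jacobiator of the bracket [·,·]_r equals the coadjoint-invariance defect of YB_r: ([[ξ,η]_r, ζ]_r + [[η,ζ]_r, ξ]_r + [[ζ,ξ]_r, η]_r)(w) = YB_r(ad*_w ξ, η, ζ) + YB_r(ξ, ad*_w η, ζ) + YB_r(ξ, η, ad*_w ζ). Consequently, [·,·]_r satisfies the Jacobi identity (so that (g*, [·,·]_r) is a Lie algebra) if and only if YB_r is invariant under the coadjoint action, i.e. YB_r(ad*_w ξ, η, ζ) + YB_r(ξ, ad*_w η, ζ) + YB_r(ξ, η, ad*_w ζ) = 0 for all w, ξ, η, ζ. (This invariance is the generalized classical Yang–Baxter equation, the condition d_μ[r,r]_μ = 0 for the coboundary cobracket −d_μ r to define a Lie bialgebra.) -/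
import Mathlib


/-! The Jacobiator of `[·,·]_r` equals the coadjoint-invariance defect of `YB_r`. -/

section RMatrix

variable {K : Type*} [Field K] [CharZero K] {g : Type*} [LieRing g] [LieAlgebra K g]

/-- Coadjoint action: `(coad x ξ) y = −ξ ⁅x, y⁆`. -/
def coad (x : g) (ξ : Module.Dual K g) : Module.Dual K g :=
  - (ξ ∘ₗ (LieAlgebra.ad K g x : g →ₗ[K] g))

/-- The bracket `[ξ,η]_r = ad*_{rξ} η − ad*_{rη} ξ` on `g*`. -/
def coBr (r : Module.Dual K g →ₗ[K] g) (ξ η : Module.Dual K g) : Module.Dual K g :=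
  coad (r ξ) η - coad (r η) ξ

/-- The alternating trilinear form
`YB_r(ξ,η,ζ) = ζ⁅rξ,rη⁆ + ξ⁅rη,rζ⁆ + η⁅rζ,rξ⁆` on `g*`. -/
def YB (r : Module.Dual K g →ₗ[K] g) (ξ η ζ : Module.Dual K g) : K :=
  ζ ⁅r ξ, r η⁆ + ξ ⁅r η, r ζ⁆ + η ⁅r ζ, r ξ⁆



set_option linter.unusedSectionVars false in
private lemma coad_apply' (x : g) (ξ : Module.Dual K g) (y : g) :
    coad x ξ y = - ξ ⁅x, y⁆ := rfl

private lemma coad_skew_key (r : Module.Dual K g →ₗ[K] g)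
    (hskew : ∀ ξ η : Module.Dual K g, η (r ξ) = - ξ (r η))
    (ζ α : Module.Dual K g) (w : g) :
    ζ ⁅r α, w⁆ = - α (r (coad w ζ)) := by
  have h : ζ ⁅r α, w⁆ = (coad w ζ) (r α) := by
    rw [coad_apply', ← lie_skew w (r α), map_neg, neg_neg]
  rw [h, hskew]

private lemma jacobiator_main (r : Module.Dual K g →ₗ[K] g)
    (hskew : ∀ ξ η : Module.Dual K g, η (r ξ) = - ξ (r η))
    (ξ η ζ : Module.Dual K g) (w : g) :
      (coBr r (coBr r ξ η) ζ + coBr r (coBr r η ζ) ξ + coBr r (coBr r ζ ξ) η) w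
        = YB r (coad w ξ) η ζ + YB r ξ (coad w η) ζ + YB r ξ η (coad w ζ) := by
  simp only [LinearMap.add_apply, coBr, LinearMap.sub_apply, coad_apply']
  rw [coad_skew_key r hskew ζ (coad (r ξ) η - coad (r η) ξ) w,
      coad_skew_key r hskew ξ (coad (r η) ζ - coad (r ζ) η) w,
      coad_skew_key r hskew η (coad (r ζ) ξ - coad (r ξ) ζ) w]
  simp only [YB, LinearMap.sub_apply, coad_apply', map_neg, map_sub, lie_lie]
  set A := r (coad w ξ); set B := r (coad w η); set C := r (coad w ζ)
  simp only [← lie_skew w, map_neg, ← lie_skew A, ← lie_skew B, ← lie_skew C, neg_neg,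
    map_sub, lie_lie]
  ring

/-- **The Jacobiator of `[·,·]_r` equals the coadjoint-invariance defect of
`YB_r`**, and consequently `[·,·]_r` is a Lie bracket on `g*` iff `YB_r` is
invariant under the coadjoint action (the generalized classical Yang–Baxter
equation, i.e. `d_μ [r,r]_μ = 0`). -/
theorem jacobiator_coBr_eq_YB_defect
    (r : Module.Dual K g →ₗ[K] g)
    (hskew : ∀ ξ η : Module.Dual K g, η (r ξ) = - ξ (r η)) :
    (∀ (ξ η ζ : Module.Dual K g) (w : g),
      (coBr r (coBr r ξ η) ζ + coBr r (coBr r η ζ) ξ + coBr r (coBr r ζ ξ) η) w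
        = YB r (coad w ξ) η ζ + YB r ξ (coad w η) ζ + YB r ξ η (coad w ζ)) ∧
    ((∀ ξ η ζ : Module.Dual K g,
        coBr r (coBr r ξ η) ζ + coBr r (coBr r η ζ) ξ + coBr r (coBr r ζ ξ) η = 0) ↔
      (∀ (w : g) (ξ η ζ : Module.Dual K g),
        YB r (coad w ξ) η ζ + YB r ξ (coad w η) ζ + YB r ξ η (coad w ζ) = 0)) := by
  refine ⟨fun ξ η ζ w => jacobiator_main r hskew ξ η ζ w, ?_⟩
  constructor
  · intro h w ξ η ζ
    rw [← jacobiator_main r hskew ξ η ζ w, h ξ η ζ]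
    rfl
  · intro h ξ η ζ
    ext w
    rw [jacobiator_main r hskew ξ η ζ w, h w ξ η ζ]
    rfl

end RMatrix
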